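/- Let K_{B,E} be a brick in a Banach space X with finite extreme radius r^ext(K_{B,E}) = sup{‖x_0‖ : x_0 an extreme point of K_{B,E}} < ∞. Then the brick is bounded by r^ext: ‖x‖ ≤ r^ext(K_{B,E}) for all x ∈ K_{B,E}; consequently r^ext(K_{B,E}) = sup_{x ∈ K_{B,E}} ‖x‖. -/

import Mathlib

open Filter Topology

/-- A (Schauder) basis of a normed space, with biorthogonal coefficient functionals `f`. -/
structure SchauderBasis' (X : Type*) [NormedAddCommGroup X] [NormedSpace ℝ X] where
  e : ℕ → X
  f : ℕ → X →L[ℝ] ℝ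
  biorth : ∀ i j, f i (e j) = if i = j then 1 else 0
  expansion : ∀ x : X,
    Tendsto (fun N => ∑ n ∈ Finset.range N, f n x • e n) atTop (𝓝 x)

/-- The brick corresponding to a basis `B` and half-heights `ε`. -/
def brick {X : Type*} [NormedAddCommGroup X] [NormedSpace ℝ X]
    (B : SchauderBasis' X) (ε : ℕ → ℝ) : Set X :=
  {x | ∀ n, |B.f n x| ≤ ε n}

/-
Moving the `N`-th coordinate of a brick point to `ε N` or to `-ε N` gives two points whose
segment contains it, so by convexity of the ball its norm is at most the larger of theirs.
Doing this one coordinate at a time bounds by `r` every brick point whose coordinates are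
extreme from some index `N` on. Such points approximate any brick point `x`: add to the
`N`-th partial sum of `x` the tail of a fixed extreme point, which exists because the empty
set of reals has no least upper bound.
-/

lemma norm_le_of_norm_add_smul_le {E : Type*} [SeminormedAddCommGroup E] [NormedSpace ℝ E]
    {u v : E} {s t r : ℝ} (hs : s ≤ 0) (ht : 0 ≤ t)
    (hsr : ‖u + s • v‖ ≤ r) (htr : ‖u + t • v‖ ≤ r) : ‖u‖ ≤ r := by
  rcases eq_or_lt_of_le (hs.trans ht) with hst | hst
  · have hs0 : s = 0 := le_antisymm hs (hst ▸ ht)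
    simpa [hs0] using hsr
  have hd : 0 < t - s := sub_pos.mpr hst
  have h1 : t / (t - s) + -s / (t - s) = 1 := by field_simp; ring
  have hu : (t / (t - s)) • (u + s • v) + (-s / (t - s)) • (u + t • v) = u := by
    rw [smul_add, smul_add, smul_smul, smul_smul, add_add_add_comm, ← add_smul, ← add_smul]
    have h0 : t / (t - s) * s + -s / (t - s) * t = 0 := by field_simp; ring
    rw [h1, h0, one_smul, zero_smul, add_zero]
  have hmem := convex_closedBall (0 : E) r (mem_closedBall_zero_iff.mpr hsr)
    (mem_closedBall_zero_iff.mpr htr) (div_nonneg ht hd.le) (div_nonneg (neg_nonneg.mpr hs) hd.le) h1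
  rwa [hu, mem_closedBall_zero_iff] at hmem

namespace SchauderBasis'

variable {X : Type*} [NormedAddCommGroup X] [NormedSpace ℝ X] (B : SchauderBasis' X)

lemma f_add_smul_e (w : X) (c : ℝ) (m N : ℕ) :
    B.f m (w + c • B.e N) = B.f m w + if m = N then c else 0 := by
  rw [map_add, map_smul, smul_eq_mul, B.biorth]
  split_ifs <;> simp

lemma f_sum_smul_e (c : ℕ → ℝ) (m N : ℕ) :
    B.f m (∑ n ∈ Finset.range N, c n • B.e n) = if m < N then c m else 0 := by
  simp only [map_sum, map_smul, smul_eq_mul, B.biorth, mul_ite, mul_one, mul_zero,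
    Finset.sum_ite_eq, Finset.mem_range]

lemma norm_le_of_abs_f_le_of_abs_f_eq {ε : ℕ → ℝ} {r : ℝ}
    (hext : ∀ x₀ : X, (∀ n, |B.f n x₀| = ε n) → ‖x₀‖ ≤ r) (N : ℕ) :
    ∀ w : X, (∀ n < N, |B.f n w| ≤ ε n) → (∀ n, N ≤ n → |B.f n w| = ε n) → ‖w‖ ≤ r := by
  induction N with
  | zero => exact fun w _ htail => hext w fun n => htail n n.zero_le
  | succ N ih =>
    intro w hhead htail
    have hN : |B.f N w| ≤ ε N := hhead N N.lt_succ_self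
    have hmove : ∀ c : ℝ, |c| = ε N → ‖w + (c - B.f N w) • B.e N‖ ≤ r := by
      intro c hc
      refine ih _ (fun n hn => ?_) (fun n hn => ?_)
      · simpa [f_add_smul_e, hn.ne] using hhead n (hn.trans N.lt_succ_self)
      · rcases eq_or_lt_of_le hn with rfl | hlt
        · simpa [f_add_smul_e] using hc
        · simpa [f_add_smul_e, hlt.ne'] using htail n hlt
    have hεN : 0 ≤ ε N := (abs_nonneg _).trans hN
    exact norm_le_of_norm_add_smul_le (by linarith [neg_abs_le (B.f N w)])
      (by linarith [le_abs_self (B.f N w)])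
      (hmove (-ε N) (by rw [abs_neg, abs_of_nonneg hεN])) (hmove (ε N) (abs_of_nonneg hεN))

lemma norm_le_of_mem_brick {ε : ℕ → ℝ} {r : ℝ}
    (hext : ∀ x₀ : X, (∀ n, |B.f n x₀| = ε n) → ‖x₀‖ ≤ r)
    {x₀ : X} (hx₀ : ∀ n, |B.f n x₀| = ε n) {x : X} (hx : x ∈ brick B ε) : ‖x‖ ≤ r := by
  let w : ℕ → X := fun N =>
    (∑ n ∈ Finset.range N, B.f n x • B.e n) + (x₀ - ∑ n ∈ Finset.range N, B.f n x₀ • B.e n)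
  have hw : Tendsto w atTop (𝓝 x) := by
    simpa using (B.expansion x).add ((tendsto_const_nhds (x := x₀)).sub (B.expansion x₀))
  have hwr : ∀ N, ‖w N‖ ≤ r := by
    intro N
    refine B.norm_le_of_abs_f_le_of_abs_f_eq hext N (w N) (fun n hn => ?_) (fun n hn => ?_)
    · simpa only [w, map_add, map_sub, f_sum_smul_e, if_pos hn, sub_self, add_zero] using hx n
    · simpa only [w, map_add, map_sub, f_sum_smul_e, if_neg (not_lt.mpr hn), sub_zero, zero_add]
        using hx₀ n
  exact le_of_tendsto' (continuous_norm.tendsto x |>.comp hw) hwr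

end SchauderBasis'

theorem stmt10_general (X : Type*) [NormedAddCommGroup X] [NormedSpace ℝ X]
    (B : SchauderBasis' X)
    (ε : ℕ → ℝ) (r : ℝ)
    (hr : IsLUB {c : ℝ | ∃ x₀ : X, (∀ n, |B.f n x₀| = ε n) ∧ c = ‖x₀‖} r) :
    (∀ x ∈ brick B ε, ‖x‖ ≤ r)
      ∧ IsLUB {c : ℝ | ∃ x ∈ brick B ε, c = ‖x‖} r := by
  have hext : ∀ x₀ : X, (∀ n, |B.f n x₀| = ε n) → ‖x₀‖ ≤ r := fun x₀ h => hr.1 ⟨x₀, h, rfl⟩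
  obtain ⟨-, x₀, hx₀, -⟩ := hr.nonempty
  have hbound : ∀ x ∈ brick B ε, ‖x‖ ≤ r := fun x hx => B.norm_le_of_mem_brick hext hx₀ hx
  refine ⟨hbound, hr.of_subset_of_superset isLUB_Iic ?_ ?_⟩
  · rintro c ⟨y, hy, rfl⟩
    exact ⟨y, fun n => (hy n).le, rfl⟩
  · rintro c ⟨x, hx, rfl⟩
    exact hbound x hx

/-- If the extreme radius (the least upper bound `r` of the norms of the extreme
points, i.e. the points `x₀` with `|B.f n x₀| = ε n` for all `n`) is finite, then
the brick is bounded by `r`, and `r` is exactly the supremum of norms over the brick. -/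
theorem stmt10 (X : Type*) [NormedAddCommGroup X] [NormedSpace ℝ X] [CompleteSpace X]
    (B : SchauderBasis' X) (hnorm : ∀ n, ‖B.e n‖ = 1)
    (ε : ℕ → ℝ) (hε : ∀ n, 0 ≤ ε n) (r : ℝ)
    (hr : IsLUB {c : ℝ | ∃ x₀ : X, (∀ n, |B.f n x₀| = ε n) ∧ c = ‖x₀‖} r) :
    (∀ x ∈ brick B ε, ‖x‖ ≤ r)
      ∧ IsLUB {c : ℝ | ∃ x ∈ brick B ε, c = ‖x‖} r :=
  stmt10_general X B ε r hr
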